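/- Let V₀ and V₁ be F-vector spaces of dimensions k and ℓ, and let φ*_{(k,ℓ),n} be the signed (super) permutation action of S_n on (V₀ ⊕ V₁)^{⊗n}, in which transposing two adjacent tensor factors both from V₁ introduces a sign −1, and no sign otherwise. Then for any σ ∈ S_n with cycle type μ = (μ₁,…,μ_r), trace(φ*_{(k,ℓ),n}(σ)) = ∏_{j=1}^{r} (k + (−1)^{μ_j+1} ℓ). -/

import Mathlib

open MvPolynomial Finset

/-- The `i`-th part (0-indexed) of a partition given by its multiset of parts,
read off from the decreasingly sorted list of parts (0 if out of range). -/
def partNth (p : Multiset ℕ) (i : ℕ) : ℕ := (p.sort (· ≥ ·)).getD i 0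

/-- The product of power sums `p_μ = ∏_j (x_1^{μ_j} + ⋯ + x_n^{μ_j})` in `n` variables. -/
noncomputable def powerSumProd (n : ℕ) (mu : Multiset ℕ) : MvPolynomial (Fin n) ℤ :=
  (mu.map fun m => ∑ i : Fin n, (X i) ^ m).prod

/-- The Vandermonde product `∏_{i<j} (x_i - x_j)`. -/
noncomputable def vandermondePoly (n : ℕ) : MvPolynomial (Fin n) ℤ :=
  ∏ i : Fin n, ∏ j : Fin n, if i < j then (X i - X j) else 1

/-- The irreducible character `χ^λ(μ)` of `S_n`, defined via the classical formula:
`χ^λ(μ)` is the coefficient of `x^{λ+δ}` (with `δ = (n-1,…,1,0)`) in `a_δ · p_μ`. -/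
noncomputable def chi (n : ℕ) (lam mu : n.Partition) : ℤ :=
  MvPolynomial.coeff
    (Finsupp.equivFunOnFinite.symm fun i : Fin n => partNth lam.parts i.val + (n - 1 - i.val))
    (vandermondePoly n * powerSumProd n mu.parts)

/-- The hook partition `(n-i, 1^i)` of `n`. -/
def hookPartition (n i : ℕ) (h : i < n) : n.Partition where
  parts := (n - i) ::ₘ Multiset.replicate i 1
  parts_pos := by
    intro a ha
    rcases Multiset.mem_cons.mp ha with h1 | h1
    · omega
    · have := Multiset.eq_of_mem_replicate h1; omega
  parts_sum := by
    simp [Multiset.sum_replicate]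
    omega

/-- The cycle type of a permutation of `Fin n`, including the fixed points as parts `1`,
so that it is a partition of `n`. -/
def fullCycleType {n : ℕ} (σ : Equiv.Perm (Fin n)) : Multiset ℕ :=
  σ.cycleType + Multiset.replicate (n - σ.cycleType.sum) 1

/-- The cycle type of `σ ∈ S_n` as a partition of `n`. -/
def permPartition {n : ℕ} (σ : Equiv.Perm (Fin n)) : n.Partition where
  parts := fullCycleType σ
  parts_pos := by
    intro a ha
    rcases Multiset.mem_add.mp ha with h1 | h1
    · have := Equiv.Perm.two_le_of_mem_cycleType h1; omega
    · have := Multiset.eq_of_mem_replicate h1; omega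
  parts_sum := by
    have h1 : σ.cycleType.sum = σ.support.card := Equiv.Perm.sum_cycleType σ
    have h2 : σ.support.card ≤ n := by
      simpa using Finset.card_le_univ σ.support
    simp [fullCycleType, Multiset.sum_replicate]
    omega

/-- The Koszul sign of the action of `σ` on a basis tensor indexed by `f`,
where indices `≥ k` are the odd ones: `(-1)` for each inversion of `σ` at a pair
of odd positions. -/
def koszulSign (k l n : ℕ) (σ : Equiv.Perm (Fin n)) (f : Fin n → Fin (k + l)) : ℤ :=
  (-1) ^ (Finset.univ.filter fun p : Fin n × Fin n =>
      p.1 < p.2 ∧ σ p.2 < σ p.1 ∧ k ≤ (f p.1).val ∧ k ≤ (f p.2).val).card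

/-- The matrix of the super (signed) place-permutation action `φ*_{(k,ℓ),n}(σ)` on
`(V₀ ⊕ V₁)^{⊗n}`, with respect to the basis of homogeneous tensors `e_{f(1)} ⊗ ⋯ ⊗ e_{f(n)}`,
where `e_0,…,e_{k-1}` is a basis of `V₀` and `e_k,…,e_{k+ℓ-1}` a basis of `V₁`:
`σ` sends `e_f` to `koszulSign ⋅ e_{f ∘ σ⁻¹}`. -/
def superPermMatrix (k l n : ℕ) (σ : Equiv.Perm (Fin n)) :
    Matrix (Fin n → Fin (k + l)) (Fin n → Fin (k + l)) ℤ :=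
  fun g f => if g = f ∘ σ.symm then koszulSign k l n σ f else 0

/-- The number `s_{k,ℓ}(λ)` of `(k,ℓ)` semistandard tableaux of a given shape:
fillings by the alphabet `1 < ⋯ < k < 1' < ⋯ < ℓ'` (encoded as `Fin (k+ℓ)`,
with the primed/odd letters being those `≥ k`), weakly increasing along rows and columns,
strict along rows for primed letters and strict along columns for unprimed letters. -/
noncomputable def sSuper (k l : ℕ) (Y : YoungDiagram) : ℕ :=
  Nat.card {T : Y.cells → Fin (k + l) //
    (∀ c d : Y.cells, (c : ℕ × ℕ).1 = (d : ℕ × ℕ).1 → (d : ℕ × ℕ).2 = (c : ℕ × ℕ).2 + 1 →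
        T c ≤ T d) ∧
    (∀ c d : Y.cells, (c : ℕ × ℕ).1 = (d : ℕ × ℕ).1 → (d : ℕ × ℕ).2 = (c : ℕ × ℕ).2 + 1 →
        k ≤ (T c).val → T c < T d) ∧
    (∀ c d : Y.cells, (d : ℕ × ℕ).1 = (c : ℕ × ℕ).1 + 1 → (c : ℕ × ℕ).2 = (d : ℕ × ℕ).2 →
        T c ≤ T d) ∧
    (∀ c d : Y.cells, (d : ℕ × ℕ).1 = (c : ℕ × ℕ).1 + 1 → (c : ℕ × ℕ).2 = (d : ℕ × ℕ).2 →
        (T c).val < k → T c < T d)}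

/-- The Young diagram of a partition. -/
def toYoung {n : ℕ} (lam : n.Partition) : YoungDiagram :=
  YoungDiagram.ofRowLens (lam.parts.sort (· ≥ ·)) (List.sortedGE_iff_pairwise.mpr (Multiset.pairwise_sort ..))

namespace TraceAux
open Equiv Equiv.Perm Finset

lemma sign_eq_signAux {n : ℕ} (f : Perm (Fin n)) : Equiv.Perm.sign f = signAux f := by
  refine Equiv.Perm.swap_induction_on f ?_ ?_
  · simp [signAux_one]
  · intro f x y hxy ih
    rw [Equiv.Perm.sign_mul, signAux_mul, sign_swap hxy, signAux_swap hxy, ih]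

lemma signAux_eq_pow {n : ℕ} (f : Perm (Fin n)) :
    signAux f = (-1 : ℤˣ) ^ (univ.filter fun p : Fin n × Fin n => p.1 < p.2 ∧ f p.2 < f p.1).card := by
  rw [signAux]
  rw [show (∏ x ∈ finPairsLT n, if f x.1 ≤ f x.2 then (-1 : ℤˣ) else 1)
      = (-1) ^ ((finPairsLT n).filter fun x => f x.1 ≤ f x.2).card by
    rw [Finset.prod_ite, Finset.prod_const, Finset.prod_const, one_pow, mul_one]]
  congr 1
  refine Finset.card_bij (fun x _ => (x.2, x.1)) ?_ ?_ ?_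
  · intro a ha
    simp only [mem_filter, mem_finPairsLT] at ha
    obtain ⟨h1, h2⟩ := ha
    simp only [mem_filter, mem_univ, true_and]
    refine ⟨h1, lt_of_le_of_ne h2 ?_⟩
    exact fun h => (ne_of_gt h1) (f.injective h)
  · intro a ha b hb h
    simp only [Prod.mk.injEq] at h
    exact Sigma.ext h.2 (heq_of_eq h.1)
  · intro b hb
    simp only [mem_filter, mem_univ, true_and] at hb
    exact ⟨⟨b.2, b.1⟩, by simp [mem_filter, mem_finPairsLT, hb.1, le_of_lt hb.2], rfl⟩

lemma sign_eq_pow_inversions {α : Type*} [DecidableEq α] [Fintype α] [LinearOrder α] (τ : Perm α) :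
    Equiv.Perm.sign τ
      = (-1 : ℤˣ) ^ (univ.filter fun pr : α × α => pr.1 < pr.2 ∧ τ pr.2 < τ pr.1).card := by
  classical
  let e : Fin (Fintype.card α) ≃o α := monoEquivOfFin α rfl
  let τ' : Perm (Fin (Fintype.card α)) := e.toEquiv.symm.permCongr τ
  have hsign : Equiv.Perm.sign τ = Equiv.Perm.sign τ' := by
    refine Equiv.Perm.sign_eq_sign_of_equiv τ τ' e.toEquiv.symm (fun x => ?_)
    simp [τ', Equiv.permCongr_apply]
  rw [hsign, sign_eq_signAux, signAux_eq_pow]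
  congr 1
  refine Finset.card_bij (fun p _ => (e p.1, e p.2)) ?_ ?_ ?_
  · intro a ha
    simp only [mem_filter, mem_univ, true_and] at ha ⊢
    simp only [mem_filter, mem_univ, true_and, τ', Equiv.permCongr_apply, Equiv.symm_symm] at ha ⊢
    constructor
    · exact (e.lt_iff_lt).mpr ha.1
    · have h2 := ha.2
      have : τ (e.toEquiv a.2) < τ (e.toEquiv a.1) := e.symm.lt_iff_lt.mp h2
      simpa using this
  · intro a _ b _ h
    simp only [Prod.mk.injEq, EmbeddingLike.apply_eq_iff_eq] at h
    exact Prod.ext h.1 h.2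
  · intro b hb
    simp only [mem_filter, mem_univ, true_and] at hb
    refine ⟨(e.symm b.1, e.symm b.2), ?_, by simp⟩
    simp only [mem_filter, mem_univ, true_and]
    simp only [mem_filter, mem_univ, true_and, τ', Equiv.permCongr_apply, Equiv.symm_symm]
    constructor
    · exact (e.symm.lt_iff_lt).mpr hb.1
    · simpa using (e.symm.lt_iff_lt).mpr hb.2

lemma invariant_zpow {α : Type*} (σ : Equiv.Perm α) (p : α → Prop)
    (hp : ∀ x, p (σ x) ↔ p x) : ∀ (j : ℤ) (x : α), p ((σ ^ j) x) ↔ p x := by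
  have hnat : ∀ (σ : Equiv.Perm α), (∀ x, p (σ x) ↔ p x) → ∀ (m : ℕ) (x), p ((σ ^ m) x) ↔ p x := by
    intro σ hp m
    induction m with
    | zero => simp
    | succ m ih =>
      intro x
      rw [pow_succ, Equiv.Perm.mul_apply, ih, hp]
  have hinv : ∀ x, p (σ⁻¹ x) ↔ p x := by
    intro x
    conv_rhs => rw [← Equiv.apply_symm_apply σ x]
    exact (hp _).symm
  intro j x
  rcases j with m | m
  · rw [Int.ofNat_eq_coe, zpow_natCast]
    exact hnat σ hp m x
  · rw [zpow_negSucc, ← inv_pow]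
    exact hnat σ⁻¹ hinv (m + 1) x

lemma sameCycle_invariant {α : Type*} (σ : Equiv.Perm α) (p : α → Prop)
    (hp : ∀ x, p (σ x) ↔ p x) {x y : α} (h : σ.SameCycle x y) : p x ↔ p y := by
  obtain ⟨j, hj⟩ := h
  rw [← hj, invariant_zpow σ p hp]

/-- the key sign lemma: the sign of `σ` restricted to an invariant set `p` is the product of
`(-1)^{len+1}` over the cycles of `σ` lying inside `p`. -/
lemma sign_subtypePerm_eq {n : ℕ} (σ : Equiv.Perm (Fin n)) :
    ∀ (p : Fin n → Prop) (_ : DecidablePred p) (hp : ∀ (x : Fin n), p x ↔ p (σ x)),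
      Equiv.Perm.sign (σ.subtypePerm (fun x => (hp x).symm))
        = ∏ c ∈ σ.cycleFactorsFinset.filter (fun c => ∀ x ∈ c.support, p x),
            (-1 : ℤˣ) ^ (c.support.card + 1) := by
  induction σ using Equiv.Perm.cycle_induction_on with
  | base_one =>
    intro p _ hp
    have h1 : (1 : Equiv.Perm (Fin n)).subtypePerm (fun x => (hp x).symm) = 1 := by
      ext x; simp
    rw [h1, Equiv.Perm.cycleFactorsFinset_one]
    simp
  | base_cycles c hc =>
    intro p _ hp
    by_cases hall : ∀ x ∈ c.support, p x
    · have h2 : ∀ x, c x ≠ x → p x := fun x hx => hall x (Equiv.Perm.mem_support.mpr hx)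
      rw [Equiv.Perm.sign_subtypePerm c (fun x => (hp x).symm) h2, hc.sign,
        hc.cycleFactorsFinset_eq_singleton]
      rw [Finset.filter_singleton, if_pos hall, Finset.prod_singleton, pow_succ]
      rw [mul_neg_one]
    · push_neg at hall
      obtain ⟨x0, hx0s, hx0p⟩ := hall
      have hnone : ∀ y ∈ c.support, ¬ p y := by
        intro y hy hpy
        have hsc : c.SameCycle x0 y :=
          hc.sameCycle (Equiv.Perm.mem_support.mp hx0s) (Equiv.Perm.mem_support.mp hy)
        exact hx0p ((sameCycle_invariant c p (fun x => (hp x).symm) hsc).mpr hpy)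
      have h1 : c.subtypePerm (fun x => (hp x).symm) = 1 := by
        ext ⟨y, hy⟩
        simp only [Equiv.Perm.subtypePerm_apply, Equiv.Perm.one_apply]
        by_contra hne
        have : y ∈ c.support := Equiv.Perm.mem_support.mpr (fun h => hne (by simp [h]))
        exact hnone y this hy
      rw [h1]
      rw [hc.cycleFactorsFinset_eq_singleton, Finset.filter_singleton,
        if_neg (by push_neg; exact ⟨x0, hx0s, hx0p⟩)]
      simp
  | induction_disjoint σ τ hd hσc ihσ ihτ =>
    intro p _ hp
    have hpσ : ∀ x, p x ↔ p (σ x) := by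
      intro x
      by_cases hx : x ∈ σ.support
      · have hτ : τ x = x := by
          rcases hd x with h1 | h1
          · exact absurd h1 (Equiv.Perm.mem_support.mp hx)
          · exact h1
        have := hp x
        rwa [Equiv.Perm.mul_apply, hτ] at this
      · rw [Equiv.Perm.notMem_support.mp hx]
    have hpτ : ∀ x, p x ↔ p (τ x) := by
      intro x
      by_cases hx : x ∈ τ.support
      · have h1 : τ x ∈ τ.support := Equiv.Perm.apply_mem_support.mpr hx
        have h2 : σ (τ x) = τ x := by
          rcases hd (τ x) with h | h
          · exact h
          · exact absurd h (Equiv.Perm.mem_support.mp h1)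
        have := hp x
        rwa [Equiv.Perm.mul_apply, h2] at this
      · rw [Equiv.Perm.notMem_support.mp hx]
    have hmul : (σ * τ).subtypePerm (fun x => (hp x).symm) = σ.subtypePerm (fun x => (hpσ x).symm) * τ.subtypePerm (fun x => (hpτ x).symm) := by
      ext ⟨y, hy⟩
      simp [Equiv.Perm.subtypePerm_apply, Equiv.Perm.mul_apply]
      rfl
    rw [hmul, Equiv.Perm.sign_mul, ihσ p _ hpσ, ihτ p _ hpτ,
      hd.cycleFactorsFinset_mul_eq_union, Finset.filter_union,
      Finset.prod_union (Finset.disjoint_filter_filter hd.disjoint_cycleFactorsFinset)]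

def sameCycleSetoid {n : ℕ} (σ : Perm (Fin n)) : Setoid (Fin n) :=
  ⟨σ.SameCycle, ⟨Equiv.Perm.SameCycle.refl σ, Equiv.Perm.SameCycle.symm,
    Equiv.Perm.SameCycle.trans⟩⟩

instance qDecEq {n : ℕ} (σ : Perm (Fin n)) : DecidableEq (Quotient (sameCycleSetoid σ)) :=
  fun a b => Quotient.recOnSubsingleton₂ a b fun x y =>
    decidable_of_iff (σ.SameCycle x y) (Quotient.eq (r := sameCycleSetoid σ)).symm

instance qFintype {n : ℕ} (σ : Perm (Fin n)) : Fintype (Quotient (sameCycleSetoid σ)) :=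
  @Quotient.fintype _ _ (sameCycleSetoid σ)
    (fun x y => decidable_of_iff (σ.SameCycle x y) Iff.rfl)

/-- the size of an equivalence class -/
def csize {n : ℕ} (σ : Perm (Fin n)) (q : Quotient (sameCycleSetoid σ)) : ℕ :=
  (univ.filter fun j => Quotient.mk (sameCycleSetoid σ) j = q).card

lemma classFinset_of_mem_support {n : ℕ} (σ : Perm (Fin n)) {i : Fin n} (hi : i ∈ σ.support) :
    (univ.filter fun j => Quotient.mk (sameCycleSetoid σ) j = Quotient.mk _ i)
      = (σ.cycleOf i).support := by
  ext j
  simp only [mem_filter, mem_univ, true_and, Quotient.eq, Equiv.Perm.mem_support_cycleOf_iff]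
  constructor
  · intro h; exact ⟨h.symm, hi⟩
  · intro h; exact h.1.symm

lemma classFinset_of_not_mem_support {n : ℕ} (σ : Perm (Fin n)) {i : Fin n}
    (hi : i ∉ σ.support) :
    (univ.filter fun j => Quotient.mk (sameCycleSetoid σ) j = Quotient.mk _ i) = {i} := by
  ext j
  simp only [mem_filter, mem_univ, true_and, Quotient.eq, Finset.mem_singleton]
  constructor
  · intro h
    obtain ⟨m, hm⟩ := h.symm
    rw [Equiv.Perm.zpow_apply_eq_self_of_apply_eq_self (Equiv.Perm.notMem_support.mp hi)] at hm
    exact hm.symm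
  · rintro rfl; exact Equiv.Perm.SameCycle.refl σ j

lemma csize_of_mem_support {n : ℕ} (σ : Perm (Fin n)) {q : Quotient (sameCycleSetoid σ)}
    (h : q.out ∈ σ.support) : csize σ q = (σ.cycleOf q.out).support.card := by
  conv_lhs => rw [csize, ← Quotient.out_eq q]
  rw [classFinset_of_mem_support σ h]

lemma csize_of_not_mem_support {n : ℕ} (σ : Perm (Fin n)) {q : Quotient (sameCycleSetoid σ)}
    (h : q.out ∉ σ.support) : csize σ q = 1 := by
  conv_lhs => rw [csize, ← Quotient.out_eq q]
  rw [classFinset_of_not_mem_support σ h, Finset.card_singleton]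

lemma two_le_csize_iff {n : ℕ} (σ : Perm (Fin n)) (q : Quotient (sameCycleSetoid σ)) :
    2 ≤ csize σ q ↔ q.out ∈ σ.support := by
  constructor
  · intro h
    by_contra hn
    rw [csize_of_not_mem_support σ hn] at h
    omega
  · intro h
    rw [csize_of_mem_support σ h]
    exact ((isCycle_cycleOf σ (Equiv.Perm.mem_support.mp h)).two_le_card_support)

lemma one_le_csize {n : ℕ} (σ : Perm (Fin n)) (q : Quotient (sameCycleSetoid σ)) :
    1 ≤ csize σ q := by
  rw [csize, Nat.one_le_iff_ne_zero, ← Nat.pos_iff_ne_zero, Finset.card_pos]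
  exact ⟨q.out, by simp [Quotient.out_eq]⟩

/-- Master product bijection between the big classes (satisfying an invariant predicate)
and the cycle factors. -/
lemma prod_classes_eq {n : ℕ} {M : Type*} [CommMonoid M] (σ : Perm (Fin n))
    (π : Fin n → Prop) [DecidablePred π] (hπ : ∀ x y, σ.SameCycle x y → (π x ↔ π y))
    (G : ℕ → M) :
    (∏ q ∈ univ.filter (fun q : Quotient (sameCycleSetoid σ) => 2 ≤ csize σ q ∧ π q.out),
        G (csize σ q))
      = ∏ c ∈ σ.cycleFactorsFinset.filter (fun c => ∀ x ∈ c.support, π x),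
          G (c.support.card) := by
  refine Finset.prod_bij (fun q _ => σ.cycleOf q.out) ?_ ?_ ?_ ?_
  · intro q hq
    simp only [mem_filter, mem_univ, true_and] at hq
    have hout : q.out ∈ σ.support := (two_le_csize_iff σ q).mp hq.1
    simp only [mem_filter]
    refine ⟨Equiv.Perm.cycleOf_mem_cycleFactorsFinset_iff.mpr hout, ?_⟩
    intro x hx
    rw [Equiv.Perm.mem_support_cycleOf_iff] at hx
    exact (hπ _ _ hx.1).mp hq.2
  · intro q1 hq1 q2 hq2 h
    simp only [mem_filter, mem_univ, true_and] at hq1 hq2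
    have hout2 : q2.out ∈ σ.support := (two_le_csize_iff σ q2).mp hq2.1
    have : q2.out ∈ (σ.cycleOf q1.out).support := by
      rw [h, Equiv.Perm.mem_support_cycleOf_iff]
      exact ⟨Equiv.Perm.SameCycle.refl σ _, hout2⟩
    rw [Equiv.Perm.mem_support_cycleOf_iff] at this
    rw [← Quotient.out_eq q1, ← Quotient.out_eq q2]
    exact Quotient.sound this.1
  · intro c hc
    simp only [mem_filter] at hc
    obtain ⟨hc1, hc2⟩ := hc
    have hcyc : c.IsCycle := (Equiv.Perm.mem_cycleFactorsFinset_iff.mp hc1).1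
    have hne : c.support.Nonempty :=
      Finset.card_pos.mp (lt_of_lt_of_le (by norm_num) hcyc.two_le_card_support)
    obtain ⟨x, hx⟩ := hne
    have hcx : c = σ.cycleOf x := Equiv.Perm.cycle_is_cycleOf hx hc1
    have hxs : x ∈ σ.support := by
      have hx' : x ∈ (σ.cycleOf x).support := by rw [← hcx]; exact hx
      exact Equiv.Perm.support_cycleOf_le σ x hx'
    set q : Quotient (sameCycleSetoid σ) := Quotient.mk _ x with hqdef
    have hsc : σ.SameCycle q.out x := @Quotient.mk_out _ (sameCycleSetoid σ) x
    have houts : q.out ∈ σ.support := (hsc.mem_support_iff).mpr hxs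
    refine ⟨q, ?_, ?_⟩
    · simp only [mem_filter, mem_univ, true_and]
      exact ⟨(two_le_csize_iff σ q).mpr houts, (hπ _ _ hsc).mpr (hc2 x hx)⟩
    · rw [hsc.cycleOf_eq, ← hcx]
  · intro q hq
    simp only [mem_filter, mem_univ, true_and] at hq
    rw [csize_of_mem_support σ ((two_le_csize_iff σ q).mp hq.1)]

end TraceAux

section KoszulAux
open Equiv Equiv.Perm Finset

lemma fixed_constant {n : ℕ} {β : Type*} (σ : Perm (Fin n)) (f : Fin n → β)
    (hf : ∀ i, f (σ i) = f i) {x y : Fin n} (h : σ.SameCycle x y) : f x = f y := by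
  obtain ⟨m, hm⟩ := h
  rw [← hm]
  have := TraceAux.invariant_zpow σ (fun z => f z = f x)
    (fun z => by show f (σ z) = f x ↔ f z = f x; rw [hf z]) m x
  simp only [eq_self_iff_true, iff_true] at this
  exact this.symm

lemma koszulSign_fixed (k l n : ℕ) (σ : Perm (Fin n)) (f : Fin n → Fin (k + l))
    (hp : ∀ x, (k ≤ (f x).val) ↔ (k ≤ (f (σ x)).val)) :
    koszulSign k l n σ f
      = ((Equiv.Perm.sign (σ.subtypePerm (p := fun i => k ≤ (f i).val) (fun x => (hp x).symm)) : ℤˣ) : ℤ) := by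
  rw [koszulSign, TraceAux.sign_eq_pow_inversions]
  simp only [Units.val_pow_eq_pow_val, Units.val_neg, Units.val_one]
  congr 1
  refine (Finset.card_bij (fun pr _ => ((pr.1 : Fin n), (pr.2 : Fin n))) ?_ ?_ ?_).symm
  · intro pr hpr
    simp only [mem_filter, mem_univ, true_and, Equiv.Perm.subtypePerm_apply,
      Subtype.mk_lt_mk, Subtype.coe_lt_coe] at hpr
    simp only [mem_filter, mem_univ, true_and]
    exact ⟨by exact_mod_cast hpr.1, by exact_mod_cast hpr.2, pr.1.2, pr.2.2⟩
  · intro a _ b _ h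
    simp only [Prod.mk.injEq] at h
    exact Prod.ext (Subtype.ext h.1) (Subtype.ext h.2)
  · intro b hb
    simp only [mem_filter, mem_univ, true_and] at hb
    refine ⟨(⟨b.1, hb.2.2.1⟩, ⟨b.2, hb.2.2.2⟩), ?_, rfl⟩
    simp only [mem_filter, mem_univ, true_and, Equiv.Perm.subtypePerm_apply,
      Subtype.mk_lt_mk]
    exact ⟨hb.1, hb.2.1⟩

end KoszulAux

/-- the trace of the super place-permutation action `φ*_{(k,ℓ),n}(σ)` on
`(V₀ ⊕ V₁)^{⊗n}` equals `∏_j (k + (-1)^{μ_j+1} ℓ)`, where `μ` is the cycle type of `σ`. -/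
theorem trace_super_permutation (k l n : ℕ) (σ : Equiv.Perm (Fin n)) :
    Matrix.trace (superPermMatrix k l n σ)
      = ((fullCycleType σ).map fun m => (k : ℤ) + (-1) ^ (m + 1) * l).prod := by
  classical
  -- the per-fixed-point weight identity
  have key : ∀ (f : Fin n → Fin (k+l)), (∀ i, f (σ i) = f i) →
      koszulSign k l n σ f
        = ∏ q : Quotient (TraceAux.sameCycleSetoid σ),
            (if k ≤ (f q.out).val then ((-1:ℤ)) ^ (TraceAux.csize σ q + 1) else 1) := by
    intro f hf
    have hp : ∀ x, (k ≤ (f x).val) ↔ (k ≤ (f (σ x)).val) := fun x => by rw [hf x]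
    have hπ : ∀ x y, σ.SameCycle x y → ((k ≤ (f x).val) ↔ (k ≤ (f y).val)) := by
      intro x y hxy
      rw [fixed_constant σ f hf hxy]
    rw [koszulSign_fixed k l n σ f hp,
      TraceAux.sign_subtypePerm_eq σ (fun i => k ≤ (f i).val) inferInstance hp]
    have step2 : ((∏ c ∈ σ.cycleFactorsFinset.filter (fun c => ∀ x ∈ c.support, k ≤ (f x).val),
          ((-1:ℤˣ)) ^ (c.support.card + 1) : ℤˣ) : ℤ)
        = ∏ c ∈ σ.cycleFactorsFinset.filter (fun c => ∀ x ∈ c.support, k ≤ (f x).val),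
            ((-1:ℤ)) ^ (c.support.card + 1) := by
      rw [← Units.coeHom_apply, map_prod]
      exact Finset.prod_congr rfl fun c _ => by
        simp [Units.val_pow_eq_pow_val]
    rw [step2, ← TraceAux.prod_classes_eq σ (fun i => k ≤ (f i).val) hπ
      (fun m => ((-1:ℤ)) ^ (m + 1))]
    rw [Finset.prod_ite (fun q => ((-1:ℤ)) ^ (TraceAux.csize σ q + 1)) (fun _ => (1:ℤ)),
      Finset.prod_const_one, mul_one]
    refine Finset.prod_subset ?_ ?_
    · intro q hq
      simp only [Finset.mem_filter, Finset.mem_univ, true_and] at hq ⊢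
      exact hq.2
    · intro q hq hq2
      simp only [Finset.mem_filter, Finset.mem_univ, true_and] at hq hq2
      have hcs : TraceAux.csize σ q = 1 := by
        have h1 := TraceAux.one_le_csize σ q
        have h2 : ¬ 2 ≤ TraceAux.csize σ q := fun h => hq2 ⟨h, hq⟩
        exact Nat.le_antisymm (Nat.lt_succ_iff.mp (Nat.not_le.mp h2)) h1
      rw [hcs]
      norm_num
  -- trace as a sum over fixed basis vectors
  have h1 : Matrix.trace (superPermMatrix k l n σ)
      = ∑ f ∈ univ.filter (fun f : Fin n → Fin (k+l) => ∀ i, f (σ i) = f i),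
          koszulSign k l n σ f := by
    rw [Matrix.trace, Finset.sum_filter]
    refine Finset.sum_congr rfl fun f _ => ?_
    simp only [Matrix.diag, superPermMatrix]
    by_cases h : ∀ i, f (σ i) = f i
    · rw [if_pos h, if_pos]
      funext j
      have := h (σ.symm j)
      rwa [Equiv.apply_symm_apply] at this
    · rw [if_neg h, if_neg]
      intro hc
      apply h
      intro i
      have := congrFun hc (σ i)
      simp only [Function.comp_apply, Equiv.symm_apply_apply] at this
      exact this
  -- reindex the fixed basis vectors by functions on cycles
  have h2 : (∑ f ∈ univ.filter (fun f : Fin n → Fin (k+l) => ∀ i, f (σ i) = f i),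
        koszulSign k l n σ f)
      = ∑ g : Quotient (TraceAux.sameCycleSetoid σ) → Fin (k+l),
          koszulSign k l n σ (fun i => g (Quotient.mk _ i)) := by
    refine (Finset.sum_bij (fun g _ => fun i => g (Quotient.mk _ i)) ?_ ?_ ?_ ?_).symm
    · intro g _
      simp only [Finset.mem_filter, Finset.mem_univ, true_and]
      intro i
      congr 1
      exact Quotient.sound (⟨-1, by simp⟩ : σ.SameCycle (σ i) i)
    · intro g1 _ g2 _ h
      funext q
      induction q using Quotient.ind with
      | _ i => exact congrFun h i
    · intro f hf
      simp only [Finset.mem_filter, Finset.mem_univ, true_and] at hf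
      refine ⟨fun q => f q.out, Finset.mem_univ _, ?_⟩
      funext i
      exact (fixed_constant σ f hf (@Quotient.mk_out _ (TraceAux.sameCycleSetoid σ) i))
    · intro g _
      rfl
  have h3 : ∀ g : Quotient (TraceAux.sameCycleSetoid σ) → Fin (k+l),
      koszulSign k l n σ (fun i => g (Quotient.mk _ i))
        = ∏ q : Quotient (TraceAux.sameCycleSetoid σ),
            (if k ≤ (g q).val then ((-1:ℤ)) ^ (TraceAux.csize σ q + 1) else 1) := by
    intro g
    rw [key _ (fun i => by
      congr 1
      exact Quotient.sound (⟨-1, by simp⟩ : σ.SameCycle (σ i) i))]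
    refine Finset.prod_congr rfl fun q _ => ?_
    rw [Quotient.out_eq]
  rw [h1, h2, Finset.sum_congr rfl (fun g _ => h3 g)]
  rw [← Fintype.piFinset_univ,
    (Finset.prod_univ_sum (fun _ : Quotient (TraceAux.sameCycleSetoid σ) => (univ : Finset (Fin (k+l))))
      (fun q v => if k ≤ (v : Fin (k+l)).val then ((-1:ℤ)) ^ (TraceAux.csize σ q + 1) else 1)).symm]
  -- compute the inner sums
  have h5 : ∀ q : Quotient (TraceAux.sameCycleSetoid σ),
      (∑ v : Fin (k+l), if k ≤ (v : Fin (k+l)).val then ((-1:ℤ)) ^ (TraceAux.csize σ q + 1) else 1)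
        = (k:ℤ) + (-1) ^ (TraceAux.csize σ q + 1) * l := by
    intro q
    rw [← Equiv.sum_comp finSumFinEquiv
      (fun v : Fin (k+l) => if k ≤ (v : Fin (k+l)).val then ((-1:ℤ)) ^ (TraceAux.csize σ q + 1) else 1)]
    rw [Fintype.sum_sum_type]
    have hL : ∀ i : Fin k, (if k ≤ ((finSumFinEquiv (Sum.inl i) : Fin (k+l))).val
        then ((-1:ℤ)) ^ (TraceAux.csize σ q + 1) else 1) = 1 := by
      intro i
      rw [if_neg]
      simp only [finSumFinEquiv_apply_left, Fin.coe_castAdd]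
      exact Nat.not_le.mpr i.isLt
    have hR : ∀ i : Fin l, (if k ≤ ((finSumFinEquiv (Sum.inr i) : Fin (k+l))).val
        then ((-1:ℤ)) ^ (TraceAux.csize σ q + 1) else 1)
          = ((-1:ℤ)) ^ (TraceAux.csize σ q + 1) := by
      intro i
      rw [if_pos]
      simp only [finSumFinEquiv_apply_right, Fin.coe_natAdd]
      exact Nat.le_add_right k i
    rw [Finset.sum_congr rfl (fun i _ => hL i), Finset.sum_congr rfl (fun i _ => hR i)]
    simp [mul_comm]
  rw [Finset.prod_congr rfl (fun q _ => h5 q)]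
  -- the final combinatorial identity
  rw [fullCycleType, Multiset.map_add, Multiset.prod_add, Multiset.map_replicate,
    Multiset.prod_replicate]
  rw [← Finset.prod_filter_mul_prod_filter_not univ (fun q => 2 ≤ TraceAux.csize σ q)]
  congr 1
  · -- big classes vs cycle type
    have hb := TraceAux.prod_classes_eq σ (fun _ => True) (fun _ _ _ => Iff.rfl)
      (fun m => (k:ℤ) + (-1) ^ (m + 1) * l)
    simp only [and_true] at hb
    rw [hb, Finset.filter_true_of_mem (fun c _ => fun x _ => trivial)]
    have hct : σ.cycleType = σ.cycleFactorsFinset.val.map (Finset.card ∘ Equiv.Perm.support) :=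
      rfl
    rw [hct, Multiset.map_map, Finset.prod_eq_multiset_prod]
    rfl
  · -- small classes vs fixed points
    have hone : ∀ q ∈ univ.filter (fun q => ¬ 2 ≤ TraceAux.csize σ q),
        (k:ℤ) + (-1) ^ (TraceAux.csize σ q + 1) * l = (k:ℤ) + l := by
      intro q hq
      simp only [Finset.mem_filter, Finset.mem_univ, true_and] at hq
      have h1 := TraceAux.one_le_csize σ q
      have hcs : TraceAux.csize σ q = 1 :=
        Nat.le_antisymm (Nat.lt_succ_iff.mp (Nat.not_le.mp hq)) h1
      rw [hcs]
      norm_num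
    rw [Finset.prod_congr rfl hone, Finset.prod_const]
    have hcard : (univ.filter (fun q => ¬ 2 ≤ TraceAux.csize σ q)).card
        = n - σ.cycleType.sum := by
      have hbij : (univ.filter (fun q : Quotient (TraceAux.sameCycleSetoid σ) =>
          ¬ 2 ≤ TraceAux.csize σ q)).card = σ.supportᶜ.card := by
        refine Finset.card_bij (fun q _ => q.out) ?_ ?_ ?_
        · intro q hq
          simp only [Finset.mem_filter, Finset.mem_univ, true_and] at hq
          rw [Finset.mem_compl]
          intro hmem
          exact hq ((TraceAux.two_le_csize_iff σ q).mpr hmem)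
        · intro q1 _ q2 _ h
          have h' : q1.out = q2.out := h
          rw [← Quotient.out_eq q1, ← Quotient.out_eq q2, h']
        · intro x hx
          rw [Finset.mem_compl] at hx
          refine ⟨Quotient.mk _ x, ?_, ?_⟩
          · simp only [Finset.mem_filter, Finset.mem_univ, true_and]
            intro h2
            have hout := (TraceAux.two_le_csize_iff σ _).mp h2
            have hsc : σ.SameCycle (Quotient.mk (TraceAux.sameCycleSetoid σ) x).out x :=
              @Quotient.mk_out _ (TraceAux.sameCycleSetoid σ) x
            exact hx (hsc.mem_support_iff.mp hout)
          · have hsc : σ.SameCycle (Quotient.mk (TraceAux.sameCycleSetoid σ) x).out x :=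
              @Quotient.mk_out _ (TraceAux.sameCycleSetoid σ) x
            obtain ⟨m, hm⟩ := hsc.symm
            rw [Equiv.Perm.zpow_apply_eq_self_of_apply_eq_self
              (Equiv.Perm.notMem_support.mp hx)] at hm
            exact hm.symm
      rw [hbij, Finset.card_compl, Equiv.Perm.sum_cycleType]
      simp
    rw [hcard]
    norm_num
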